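/- Let Γ be a Coxeter graph with vertex set S, and let s, t ∈ S with s ≠ t and m_{s,t} = ∞. Set X = S \ {s}, Y = S \ {t}, Z = S \ {s,t}. Then the Artin-Tits group A_Γ is isomorphic to the amalgamated free product A_X ∗_{A_Z} A_Y of the Artin-Tits groups of the full subgraphs Γ_X and Γ_Y over the Artin-Tits group of Γ_Z. -/

import Mathlib

open Monoid

/-- The alternating word `s t s t ⋯` of length `m`, as an element of the free group. -/
def altWord {S : Type} (s t : S) : ℕ → FreeGroup S
  | 0 => 1
  | n + 1 => FreeGroup.of s * altWord t s n

/-- The braid relations `Π(σ_s,σ_t : m_{s,t}) = Π(σ_t,σ_s : m_{s,t})` (for `s ≠ t` and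
`m_{s,t} ≠ ∞`, infinity being encoded by the entry `0`) of an Artin-Tits group. -/
def artinRels {S : Type} (M : CoxeterMatrix S) : Set (FreeGroup S) :=
  {r | ∃ s t : S, s ≠ t ∧ M s t ≠ 0 ∧
    r = altWord s t (M s t) * (altWord t s (M s t))⁻¹}

/-- The Artin-Tits group of a Coxeter matrix (`0` entries encoding `∞`). -/
abbrev ArtinTits {S : Type} (M : CoxeterMatrix S) : Type := PresentedGroup (artinRels M)

/-- The restriction of a Coxeter matrix to a subset `X` of its index set. -/
def CoxeterMatrix.restrict {S : Type} (M : CoxeterMatrix S) (X : Set S) :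
    CoxeterMatrix X where
  M := fun a b => M a b
  isSymm := by
    unfold Matrix.IsSymm
    ext a b
    exact M.symmetric b a
  diagonal a := M.diagonal a
  off_diagonal a b h := M.off_diagonal a b (fun hc => h (Subtype.ext hc))

/-- An auxiliary two-element family of groups, used to form the amalgamated free
product `A ∗_K B` as a pushout `PushoutI` over the index type `Bool`. -/
def GPair (A B : Type) : Bool → Type
  | true => A
  | false => B

instance instGPairGroup {A B : Type} [Group A] [Group B] : (b : Bool) → Group (GPair A B b)
  | true => inferInstanceAs (Group A)
  | false => inferInstanceAs (Group B)

/-- The pair of homomorphisms `K →* A`, `K →* B`, as a `Bool`-indexed family. -/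
def GPairHom {K A B : Type} [Group K] [Group A] [Group B]
    (f : K →* A) (g : K →* B) : (b : Bool) → (K →* GPair A B b)
  | true => f
  | false => g

lemma mem_complSingleton_left {S : Type} {s t : S} (z : ({s, t}ᶜ : Set S)) :
    (z : S) ∈ ({s}ᶜ : Set S) := by
  have h2 := z.2
  simp only [Set.mem_compl_iff, Set.mem_insert_iff, Set.mem_singleton_iff] at *
  tauto

lemma mem_complSingleton_right {S : Type} {s t : S} (z : ({s, t}ᶜ : Set S)) :
    (z : S) ∈ ({t}ᶜ : Set S) := by
  have h2 := z.2
  simp only [Set.mem_compl_iff, Set.mem_insert_iff, Set.mem_singleton_iff] at *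
  tauto

/-!
When `m_{s,t} = ∞` no braid relation mentions both `s` and `t`, so every relation of `A_Γ` is a
relation of `A_X` or of `A_Y`, and the generators of `S` can be sent to `A_X ∗_{A_Z} A_Y` through
`A_X` or `A_Y`, consistently on `Z = X ∩ Y`. In the other direction the inclusions
`A_X → A_Γ ← A_Y` agree on `A_Z`. Both composites fix the generators, hence are the identity.
-/

lemma altWord_map {S T : Type} (f : S → T) (s t : S) (n : ℕ) :
    FreeGroup.map f (altWord s t n) = altWord (f s) (f t) n := by
  induction n generalizing s t with
  | zero => simp [altWord]
  | succ n ih => simp [altWord, ih]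

def GPairCoHom {K A B : Type} [Group K] [Group A] [Group B]
    (f : A →* K) (g : B →* K) : (b : Bool) → (GPair A B b →* K)
  | true => f
  | false => g

namespace ArtinTits

variable {S : Type} (M : CoxeterMatrix S)

def lift {G : Type} [Group G] (f : S → G)
    (hf : ∀ a b, a ≠ b → M a b ≠ 0 →
      FreeGroup.lift f (altWord a b (M a b)) = FreeGroup.lift f (altWord b a (M a b))) :
    ArtinTits M →* G :=
  PresentedGroup.toGroup (f := f) <| by
    rintro r ⟨a, b, hab, hM, rfl⟩
    rw [map_mul, map_inv, hf a b hab hM, mul_inv_cancel]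

@[simp]
lemma lift_of {G : Type} [Group G] {f : S → G} (hf) (u : S) :
    lift M f hf (PresentedGroup.of u) = f u :=
  PresentedGroup.toGroup.of _

def restrictHom (X : Set S) : ArtinTits (M.restrict X) →* ArtinTits M :=
  PresentedGroup.map (FreeGroup.map Subtype.val) <| by
    rintro r ⟨a, b, hab, hM, rfl⟩
    refine ⟨a, b, Subtype.coe_injective.ne hab, hM, ?_⟩
    rw [map_mul, map_inv, altWord_map, altWord_map]
    rfl

@[simp]
lemma restrictHom_of (X : Set S) (x : X) :
    restrictHom M X (PresentedGroup.of x) = PresentedGroup.of (x : S) :=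
  rfl

lemma restrictHom_comp_eq {X Z : Set S} (hZX : Z ⊆ X)
    (φ : ArtinTits (M.restrict Z) →* ArtinTits (M.restrict X))
    (hφ : ∀ z : Z, φ (PresentedGroup.of z) = PresentedGroup.of ⟨z, hZX z.2⟩) :
    (restrictHom M X).comp φ = restrictHom M Z :=
  PresentedGroup.ext fun z => by simp [hφ]

lemma lift_altWord_eq_of_restrict {G : Type} [Group G] {X : Set S}
    (H : ArtinTits (M.restrict X) →* G) {f : S → G} (hf : ∀ x : X, f x = H (PresentedGroup.of x))
    {a b : S} (ha : a ∈ X) (hb : b ∈ X) (hab : a ≠ b) (hM : M a b ≠ 0) :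
    FreeGroup.lift f (altWord a b (M a b)) = FreeGroup.lift f (altWord b a (M a b)) := by
  set a' : X := ⟨a, ha⟩
  set b' : X := ⟨b, hb⟩
  have lift_map_val (w : FreeGroup X) :
      FreeGroup.lift f (FreeGroup.map Subtype.val w) = H (PresentedGroup.mk _ w) :=
    DFunLike.congr_fun (FreeGroup.ext_hom ((FreeGroup.lift f).comp (FreeGroup.map Subtype.val))
      (H.comp (PresentedGroup.mk _)) fun x => (FreeGroup.lift_apply_of (f := f)).trans (hf x)) w
  have braid : PresentedGroup.mk (artinRels (M.restrict X)) (altWord a' b' (M a b)) =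
      PresentedGroup.mk _ (altWord b' a' (M a b)) :=
    PresentedGroup.mk_eq_mk_of_mul_inv_mem ⟨a', b', fun h => hab congr($h.1), hM, rfl⟩
  calc FreeGroup.lift f (altWord a b (M a b))
      = FreeGroup.lift f (FreeGroup.map Subtype.val (altWord a' b' (M a b))) := by
        rw [altWord_map]
    _ = FreeGroup.lift f (FreeGroup.map Subtype.val (altWord b' a' (M a b))) := by
        rw [lift_map_val, lift_map_val, braid]
    _ = FreeGroup.lift f (altWord b a (M a b)) := by rw [altWord_map]

lemma exists_lift_of_cover {G : Type} [Group G] {X Y : Set S} (hcover : ∀ u, u ∈ X ∨ u ∈ Y)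
    (hrel : ∀ a b, a ≠ b → M a b ≠ 0 → a ∈ X ∧ b ∈ X ∨ a ∈ Y ∧ b ∈ Y)
    (fX : ArtinTits (M.restrict X) →* G) (fY : ArtinTits (M.restrict Y) →* G)
    (hagree : ∀ u (hX : u ∈ X) (hY : u ∈ Y),
      fX (PresentedGroup.of ⟨u, hX⟩) = fY (PresentedGroup.of ⟨u, hY⟩)) :
    ∃ f : ArtinTits M →* G, (∀ x : X, f (PresentedGroup.of (x : S)) = fX (PresentedGroup.of x))
      ∧ ∀ y : Y, f (PresentedGroup.of (y : S)) = fY (PresentedGroup.of y) := by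
  classical
  let F : S → G := fun u =>
    if h : u ∈ X then fX (PresentedGroup.of ⟨u, h⟩)
    else fY (PresentedGroup.of ⟨u, (hcover u).resolve_left h⟩)
  have hFX (x : X) : F x = fX (PresentedGroup.of x) := dif_pos x.2
  have hFY (y : Y) : F y = fY (PresentedGroup.of y) := by
    by_cases h : (y : S) ∈ X
    · exact (dif_pos h).trans (hagree y h y.2)
    · exact dif_neg h
  have hF a b (hab : a ≠ b) (hM : M a b ≠ 0) :
      FreeGroup.lift F (altWord a b (M a b)) = FreeGroup.lift F (altWord b a (M a b)) := by
    rcases hrel a b hab hM with ⟨ha, hb⟩ | ⟨ha, hb⟩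
    · exact lift_altWord_eq_of_restrict M fX hFX ha hb hab hM
    · exact lift_altWord_eq_of_restrict M fY hFY ha hb hab hM
  exact ⟨lift M F hF, fun x => (lift_of M hF x).trans (hFX x),
    fun y => (lift_of M hF y).trans (hFY y)⟩

theorem exists_mulEquiv_pushoutI {X Y Z : Set S} (hZX : Z ⊆ X) (hZY : Z ⊆ Y) (hXY : X ∩ Y ⊆ Z)
    (hcover : ∀ u, u ∈ X ∨ u ∈ Y)
    (hrel : ∀ a b, a ≠ b → M a b ≠ 0 → a ∈ X ∧ b ∈ X ∨ a ∈ Y ∧ b ∈ Y)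
    (φX : ArtinTits (M.restrict Z) →* ArtinTits (M.restrict X))
    (φY : ArtinTits (M.restrict Z) →* ArtinTits (M.restrict Y))
    (hφX : ∀ z : Z, φX (PresentedGroup.of z) = PresentedGroup.of ⟨z, hZX z.2⟩)
    (hφY : ∀ z : Z, φY (PresentedGroup.of z) = PresentedGroup.of ⟨z, hZY z.2⟩) :
    ∃ e : ArtinTits M ≃* PushoutI (GPairHom φX φY),
      (∀ x : X, e (PresentedGroup.of (x : S)) = PushoutI.of true (PresentedGroup.of x))
      ∧ ∀ y : Y, e (PresentedGroup.of (y : S)) = PushoutI.of false (PresentedGroup.of y) := by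
  have hagree u (hX : u ∈ X) (hY : u ∈ Y) :
      PushoutI.of (φ := GPairHom φX φY) true (PresentedGroup.of ⟨u, hX⟩) =
        PushoutI.of false (PresentedGroup.of ⟨u, hY⟩) := by
    rw [← hφX ⟨u, hXY ⟨hX, hY⟩⟩, ← hφY ⟨u, hXY ⟨hX, hY⟩⟩]
    exact (PushoutI.of_apply_eq_base (GPairHom φX φY) true _).trans
      (PushoutI.of_apply_eq_base (GPairHom φX φY) false _).symm
  obtain ⟨toPushout, hX, hY⟩ := exists_lift_of_cover M hcover hrel _ _ hagree
  let ofPushout : PushoutI (GPairHom φX φY) →* ArtinTits M :=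
    PushoutI.lift (GPairCoHom (restrictHom M X) (restrictHom M Y)) (restrictHom M Z)
      fun | true => restrictHom_comp_eq M hZX φX hφX
          | false => restrictHom_comp_eq M hZY φY hφY
  have ofPushout_true (x : X) : ofPushout (PushoutI.of true (PresentedGroup.of x)) =
      PresentedGroup.of (x : S) := PushoutI.lift_of ..
  have ofPushout_false (y : Y) : ofPushout (PushoutI.of false (PresentedGroup.of y)) =
      PresentedGroup.of (y : S) := PushoutI.lift_of ..
  have left_inv : ofPushout.comp toPushout = .id _ := PresentedGroup.ext fun u => by
    rcases hcover u with hu | hu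
    · exact congr(ofPushout $(hX ⟨u, hu⟩)).trans (ofPushout_true ⟨u, hu⟩)
    · exact congr(ofPushout $(hY ⟨u, hu⟩)).trans (ofPushout_false ⟨u, hu⟩)
  have right_inv : toPushout.comp ofPushout = .id _ := by
    refine PushoutI.hom_ext_nonempty fun
      | true => PresentedGroup.ext fun x => ?_
      | false => PresentedGroup.ext fun y => ?_
    · exact congr(toPushout $(ofPushout_true x)).trans (hX x)
    · exact congr(toPushout $(ofPushout_false y)).trans (hY y)
  exact ⟨MonoidHom.toMulEquiv _ _ left_inv right_inv, hX, hY⟩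

end ArtinTits

theorem artinTits_amalgam {S : Type} (M : CoxeterMatrix S)
    (s t : S) (hst : s ≠ t) (hinf : M s t = 0)
    (φX : ArtinTits (M.restrict ({s, t}ᶜ)) →* ArtinTits (M.restrict ({s}ᶜ)))
    (φY : ArtinTits (M.restrict ({s, t}ᶜ)) →* ArtinTits (M.restrict ({t}ᶜ)))
    (hφX : ∀ z : ({s, t}ᶜ : Set S),
      φX (PresentedGroup.of z) = PresentedGroup.of ⟨z, mem_complSingleton_left z⟩)
    (hφY : ∀ z : ({s, t}ᶜ : Set S),
      φY (PresentedGroup.of z) = PresentedGroup.of ⟨z, mem_complSingleton_right z⟩) :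
    ∃ e : ArtinTits M ≃* PushoutI (GPairHom φX φY),
      (∀ x : ({s}ᶜ : Set S),
          e (PresentedGroup.of (x : S))
            = PushoutI.of (φ := GPairHom φX φY) true (PresentedGroup.of x))
      ∧ (∀ y : ({t}ᶜ : Set S),
          e (PresentedGroup.of (y : S))
            = PushoutI.of (φ := GPairHom φX φY) false (PresentedGroup.of y)) := by
  have hXY : ({s}ᶜ ∩ {t}ᶜ : Set S) ⊆ {s, t}ᶜ := by
    intro u; simp +contextual
  have hcover (u : S) : u ∈ ({s}ᶜ : Set S) ∨ u ∈ ({t}ᶜ : Set S) := by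
    by_cases hu : u = s
    · exact .inr (hu ▸ hst)
    · exact .inl hu
  have hrel (a b : S) (hab : a ≠ b) (hM : M a b ≠ 0) :
      a ∈ ({s}ᶜ : Set S) ∧ b ∈ ({s}ᶜ : Set S) ∨ a ∈ ({t}ᶜ : Set S) ∧ b ∈ ({t}ᶜ : Set S) := by
    have hM' : M b a ≠ 0 := M.symmetric a b ▸ hM
    simp only [Set.mem_compl_iff, Set.mem_singleton_iff]
    by_contra! h
    obtain ⟨rfl, rfl⟩ | ⟨rfl, rfl⟩ : a = s ∧ b = t ∨ a = t ∧ b = s := by grind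
    exacts [hM hinf, hM' hinf]
  exact ArtinTits.exists_mulEquiv_pushoutI M (fun u hu => mem_complSingleton_left ⟨u, hu⟩)
    (fun u hu => mem_complSingleton_right ⟨u, hu⟩) hXY hcover hrel φX φY hφX hφY
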